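/- Define v : ℝ² ∖ {(0,0)} → ℝ by v(x, y) = −(x² + y²)^(1/3). Then v satisfies v⁴·( v_xx·v_yy − (v_xy)² ) = −4/27 at every point of ℝ² ∖ {(0,0)}, and at every such point the eigenvalues of the Hessian matrix of v are −(2/3)·v^(−2) and (2/9)·v^(−2); in particular the Hessian of v has mixed signature. -/

import Mathlib

open Real Matrix

/-- The function `v(x,y) = −(x² + y²)^(1/3)`. -/
noncomputable def vCone (x y : ℝ) : ℝ := -((x ^ 2 + y ^ 2) ^ ((1 : ℝ) / 3))

/-- Second partial derivative `v_xx`. -/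
noncomputable def vConexx (x y : ℝ) : ℝ :=
  deriv (fun x' : ℝ => deriv (fun x'' : ℝ => vCone x'' y) x') x

/-- Second partial derivative `v_yy`. -/
noncomputable def vConeyy (x y : ℝ) : ℝ :=
  deriv (fun y' : ℝ => deriv (fun y'' : ℝ => vCone x y'') y') y

/-- Mixed second partial derivative `v_xy`. -/
noncomputable def vConexy (x y : ℝ) : ℝ :=
  deriv (fun y' : ℝ => deriv (fun x' : ℝ => vCone x' y') x) y

/-!
With `r = x² + y²`, the Hessian of `r ^ p` is `2p r^(p-1) I + 4p(p-1) r^(p-2) (x, y)(x, y)ᵀ`.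
For `v = -r^(1/3)`, where `r^(-2/3) = v⁻²`, its entries are `v_xx = v⁻² (-2/3 + 8x²/(9r))`,
`v_yy = v⁻² (-2/3 + 8y²/(9r))` and `v_xy = v⁻² · 8xy/(9r)`, so the Hessian has trace
`-(4/9) v⁻²` and determinant `-(4/27) v⁻⁴`. These are the sum and the product of
`-(2/3) v⁻²` and `(2/9) v⁻²`, which are therefore its eigenvalues.
-/

open Polynomial Filter Topology

theorem Matrix.spectrum_fin_two_eq_pair {K : Type*} [Field K] {A : Matrix (Fin 2) (Fin 2) K}
    {α β : K} (htr : A.trace = α + β) (hdet : A.det = α * β) : spectrum K A = {α, β} := by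
  ext k
  rw [mem_spectrum_iff_isRoot_charpoly, charpoly_fin_two, IsRoot, htr, hdet]
  have hfactor : k ^ 2 - (α + β) * k + α * β = (k - α) * (k - β) := by ring
  simp [hfactor, sub_eq_zero]

section SqAddRpow

variable {p c t : ℝ}

theorem hasDerivAt_sq_add_rpow (ht : t ^ 2 + c ≠ 0) :
    HasDerivAt (fun s => (s ^ 2 + c) ^ p) (2 * p * t * (t ^ 2 + c) ^ (p - 1)) t := by
  convert ((hasDerivAt_pow 2 t).add_const c).rpow_const (p := p) (Or.inl ht) using 1
  ring

theorem deriv_sq_add_rpow_eventuallyEq (ht : t ^ 2 + c ≠ 0) :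
    deriv (fun s => (s ^ 2 + c) ^ p) =ᶠ[𝓝 t] fun s => 2 * p * s * (s ^ 2 + c) ^ (p - 1) := by
  have hne : ∀ᶠ s in 𝓝 t, s ^ 2 + c ≠ 0 :=
    (by fun_prop : Continuous fun s : ℝ => s ^ 2 + c).continuousAt.eventually_ne ht
  exact hne.mono fun s hs => (hasDerivAt_sq_add_rpow hs).deriv

theorem deriv_deriv_sq_add_rpow (ht : t ^ 2 + c ≠ 0) :
    deriv (deriv fun s => (s ^ 2 + c) ^ p) t
      = 2 * p * (t ^ 2 + c) ^ (p - 1) + 4 * p * (p - 1) * t ^ 2 * (t ^ 2 + c) ^ (p - 2) := by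
  rw [(deriv_sq_add_rpow_eventuallyEq ht).deriv_eq]
  have h := ((hasDerivAt_id' t).const_mul (2 * p)).fun_mul (hasDerivAt_sq_add_rpow (p := p - 1) ht)
  rw [h.deriv, show p - 1 - 1 = p - 2 by ring]
  ring

theorem deriv_deriv_sq_add_sq_rpow_mixed {x y : ℝ} (hr : x ^ 2 + y ^ 2 ≠ 0) :
    deriv (fun y' => deriv (fun s => (s ^ 2 + y' ^ 2) ^ p) x) y
      = 4 * p * (p - 1) * x * y * (x ^ 2 + y ^ 2) ^ (p - 2) := by
  rw [add_comm] at hr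
  have hne : ∀ᶠ y' in 𝓝 y, y' ^ 2 + x ^ 2 ≠ 0 :=
    (by fun_prop : Continuous fun s : ℝ => s ^ 2 + x ^ 2).continuousAt.eventually_ne hr
  have heq : (fun y' => deriv (fun s => (s ^ 2 + y' ^ 2) ^ p) x)
      =ᶠ[𝓝 y] fun y' => 2 * p * x * (y' ^ 2 + x ^ 2) ^ (p - 1) :=
    hne.mono fun y' hy' => by
      dsimp only
      rw [(hasDerivAt_sq_add_rpow (by rwa [add_comm])).deriv, add_comm]
  have h := (hasDerivAt_sq_add_rpow (p := p - 1) hr).const_mul (2 * p * x)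
  rw [heq.deriv_eq, h.deriv, show p - 1 - 1 = p - 2 by ring, add_comm (y ^ 2)]
  ring

end SqAddRpow

theorem vCone_comm (x y : ℝ) : vCone x y = vCone y x := by
  rw [vCone, vCone, add_comm]

theorem vConeyy_eq_vConexx (x y : ℝ) : vConeyy x y = vConexx y x := by
  simp only [vConeyy, vConexx, vCone_comm x]

theorem vConexx_eq_neg_deriv_deriv (x y : ℝ) :
    vConexx x y = -deriv (deriv fun s => (s ^ 2 + y ^ 2) ^ ((1 : ℝ) / 3)) x := by
  simp only [vConexx, vCone, deriv.fun_neg']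

theorem vConexy_eq_neg_deriv_deriv (x y : ℝ) :
    vConexy x y = -deriv (fun y' => deriv (fun s => (s ^ 2 + y' ^ 2) ^ ((1 : ℝ) / 3)) x) y := by
  simp only [vConexy, vCone, deriv.fun_neg]

theorem vCone_zpow_neg_two (x y : ℝ) :
    vCone x y ^ (-2 : ℤ) = (x ^ 2 + y ^ 2) ^ ((1 : ℝ) / 3 - 1) := by
  rw [vCone, Even.neg_zpow (by decide), ← rpow_intCast, ← rpow_mul (by positivity)]
  norm_num

section vConeHessian

variable {x y : ℝ}

theorem sq_add_sq_rpow_one_third_sub_two (hr : x ^ 2 + y ^ 2 ≠ 0) :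
    (x ^ 2 + y ^ 2) ^ ((1 : ℝ) / 3 - 2) = vCone x y ^ (-2 : ℤ) / (x ^ 2 + y ^ 2) := by
  rw [vCone_zpow_neg_two, ← rpow_sub_one hr]
  norm_num

theorem vConexx_eq_zpow (hr : x ^ 2 + y ^ 2 ≠ 0) :
    vConexx x y = vCone x y ^ (-2 : ℤ) * (-(2 / 3) + 8 / 9 * x ^ 2 / (x ^ 2 + y ^ 2)) := by
  rw [vConexx_eq_neg_deriv_deriv, deriv_deriv_sq_add_rpow hr,
    sq_add_sq_rpow_one_third_sub_two hr, vCone_zpow_neg_two]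
  ring

theorem vConeyy_eq_zpow (hr : x ^ 2 + y ^ 2 ≠ 0) :
    vConeyy x y = vCone x y ^ (-2 : ℤ) * (-(2 / 3) + 8 / 9 * y ^ 2 / (x ^ 2 + y ^ 2)) := by
  rw [add_comm] at hr
  rw [vConeyy_eq_vConexx, vConexx_eq_zpow hr, vCone_comm, add_comm (y ^ 2)]

theorem vConexy_eq_zpow (hr : x ^ 2 + y ^ 2 ≠ 0) :
    vConexy x y = vCone x y ^ (-2 : ℤ) * (8 / 9 * x * y / (x ^ 2 + y ^ 2)) := by
  rw [vConexy_eq_neg_deriv_deriv, deriv_deriv_sq_add_sq_rpow_mixed hr,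
    sq_add_sq_rpow_one_third_sub_two hr]
  ring

theorem vCone_hessian_trace (hr : x ^ 2 + y ^ 2 ≠ 0) :
    vConexx x y + vConeyy x y = -(4 / 9) * vCone x y ^ (-2 : ℤ) := by
  rw [vConexx_eq_zpow hr, vConeyy_eq_zpow hr]
  field_simp
  ring

theorem vCone_hessian_det (hr : x ^ 2 + y ^ 2 ≠ 0) :
    vConexx x y * vConeyy x y - vConexy x y ^ 2 = -(4 / 27) * (vCone x y ^ (-2 : ℤ)) ^ 2 := by
  rw [vConexx_eq_zpow hr, vConeyy_eq_zpow hr, vConexy_eq_zpow hr]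
  field_simp
  ring

end vConeHessian

/-- `v(x,y) = −(x² + y²)^(1/3)` satisfies `v⁴·(v_xx·v_yy − v_xy²) = −4/27` away from the
origin, and there the eigenvalues of its Hessian matrix are `−(2/3)·v⁻²` and
`(2/9)·v⁻²`; in particular the Hessian has mixed signature. -/
theorem stmt18 (x y : ℝ) (h : (x, y) ≠ (0, 0)) :
    vCone x y ^ 4 * (vConexx x y * vConeyy x y - vConexy x y ^ 2) = -4 / 27
    ∧ spectrum ℝ (!![vConexx x y, vConexy x y; vConexy x y, vConeyy x y])
        = {-(2 / 3) * vCone x y ^ (-2 : ℤ), (2 / 9) * vCone x y ^ (-2 : ℤ)} := by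
  have hr : x ^ 2 + y ^ 2 ≠ 0 := by
    rw [Ne, add_eq_zero_iff_of_nonneg (sq_nonneg x) (sq_nonneg y)]
    simpa [Prod.ext_iff] using h
  have hv : vCone x y ≠ 0 := by
    rw [vCone, neg_ne_zero]
    exact (rpow_pos_of_pos (by positivity) _).ne'
  refine ⟨?_, spectrum_fin_two_eq_pair ?_ ?_⟩
  · rw [vCone_hessian_det hr]
    field_simp
  · rw [trace_fin_two_of, vCone_hessian_trace hr]
    ring
  · rw [det_fin_two_of, ← sq, vCone_hessian_det hr]
    ring
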